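/- Let φ: S^n → S^n be an isometry of the round sphere (with respect to some Riemannian metric g on S^n for which the antipodal map is an isometry, φ being an isometry from (S^n, g) to the standard round sphere). Then φ commutes with the antipodal map: φ(-p) = -φ(p) for all p ∈ S^n. -/

import Mathlib

/- STATEMENT 0: If g is a Riemannian metric on Sⁿ for which the antipodal map is an
isometry, and φ : (Sⁿ, g) → (Sⁿ, σ̃) is an isometry onto the standard round sphere
(encoded via the round distance `distRound`, so that g has constant curvature 1 by
Cartan), then φ commutes with the antipodal map.  The metric g is encoded by its
distance function `dg`. -/

open Metric
noncomputable section

abbrev Sph (n : ℕ) := Metric.sphere (0 : EuclideanSpace ℝ (Fin (n + 1))) 1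

/-- The intrinsic (round) distance on the standard unit sphere. -/
def distRound (n : ℕ) (p q : Sph n) : ℝ :=
  Real.arccos (inner ℝ (p : EuclideanSpace ℝ (Fin (n + 1))) (q : EuclideanSpace ℝ (Fin (n + 1))))

/-! Since `-id` is a `g`-isometry, `ψ := φ ∘ (-·) ∘ φ⁻¹` preserves the round distance, hence
inner products on the sphere; it is an involution without fixed points. Such a map is `-id`:
for `v := x + ψ x` one gets `⟪ψ u, v⟫ = ⟪u, v⟫` for all `u`, so if `v ≠ 0` the unit vector
`u = v / ‖v‖` satisfies `⟪ψ u, u⟫ = 1`, i.e. `ψ u = u`. Hence `φ (-p) = ψ (φ p) = -φ p`. -/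

open scoped InnerProductSpace

section UnitSphere

variable {E : Type*} [NormedAddCommGroup E] [InnerProductSpace ℝ E]

theorem real_inner_mem_Icc_of_mem_unit_sphere (x y : sphere (0 : E) 1) :
    ⟪(x : E), y⟫_ℝ ∈ Set.Icc (-1) 1 := by
  have h := abs_real_inner_le_norm (x : E) y
  rw [norm_eq_of_mem_sphere, norm_eq_of_mem_sphere, one_mul] at h
  exact abs_le.mp h

variable {ψ : sphere (0 : E) 1 → sphere (0 : E) 1}
  (hψ : ∀ x y, ⟪(ψ x : E), ψ y⟫_ℝ = ⟪(x : E), y⟫_ℝ) (hinv : Function.Involutive ψ)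
include hψ hinv

theorem inner_apply_left_add_apply (u x : sphere (0 : E) 1) :
    ⟪(ψ u : E), x + ψ x⟫_ℝ = ⟪(u : E), x + ψ x⟫_ℝ := by
  have hsymm : ⟪(ψ u : E), x⟫_ℝ = ⟪(u : E), ψ x⟫_ℝ := by
    conv_lhs => rw [← hinv x]
    exact hψ u (ψ x)
  rw [inner_add_right, inner_add_right, hsymm, hψ, add_comm]

theorem eq_neg_of_involutive_of_forall_ne (hfix : ∀ x, ψ x ≠ x) (x : sphere (0 : E) 1) :
    ψ x = -x := by
  by_contra hne
  set v : E := x + ψ x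
  have hv : v ≠ 0 := fun h ↦ hne <| Subtype.ext <| by
    rw [coe_neg_sphere]
    exact eq_neg_of_add_eq_zero_right h
  let u : sphere (0 : E) 1 := ⟨(‖v‖⁻¹ : ℝ) • v, by simpa using norm_smul_inv_norm (𝕜 := ℝ) hv⟩
  have hu : ⟪(ψ u : E), u⟫_ℝ = 1 := by
    calc ⟪(ψ u : E), u⟫_ℝ = ‖v‖⁻¹ * ⟪(ψ u : E), v⟫_ℝ := real_inner_smul_right _ _ _
      _ = ‖v‖⁻¹ * ⟪(u : E), v⟫_ℝ := by rw [inner_apply_left_add_apply hψ hinv]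
      _ = ⟪(u : E), u⟫_ℝ := (real_inner_smul_right _ _ _).symm
      _ = 1 := inner_self_eq_one_of_norm_eq_one (norm_eq_of_mem_sphere u)
  refine hfix u (Subtype.ext ?_)
  exact (inner_eq_one_iff_of_norm_eq_one (norm_eq_of_mem_sphere _) (norm_eq_of_mem_sphere _)).mp hu

end UnitSphere

theorem inner_eq_of_distRound_eq {n : ℕ} {x y z w : Sph n}
    (h : distRound n x y = distRound n z w) :
    ⟪(x : EuclideanSpace ℝ (Fin (n + 1))), y⟫_ℝ = ⟪(z : EuclideanSpace ℝ (Fin (n + 1))), w⟫_ℝ :=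
  Real.arccos_injOn (real_inner_mem_Icc_of_mem_unit_sphere x y)
    (real_inner_mem_Icc_of_mem_unit_sphere z w) h

theorem stmt_0 (n : ℕ) (dg : Sph n → Sph n → ℝ) (φ : Sph n ≃ Sph n)
    (hanti : ∀ p q : Sph n, dg (-p) (-q) = dg p q)
    (hφ : ∀ p q : Sph n, distRound n (φ p) (φ q) = dg p q) :
    ∀ p : Sph n, φ (-p) = -φ p := by
  set ψ : Sph n → Sph n := fun x ↦ φ (-φ.symm x)
  have hψ : ∀ x y, distRound n (ψ x) (ψ y) = distRound n x y := fun x y ↦ by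
    rw [hφ, hanti, ← hφ, φ.apply_symm_apply, φ.apply_symm_apply]
  have hinv : Function.Involutive ψ := fun x ↦ by simp [ψ]
  have hfix : ∀ x, ψ x ≠ x := fun x h ↦
    ne_neg_of_mem_unit_sphere ℝ (φ.symm x) (φ.symm_apply_eq.mpr h.symm)
  intro p
  simpa [ψ] using eq_neg_of_involutive_of_forall_ne (fun x y ↦ inner_eq_of_distRound_eq (hψ x y))
    hinv hfix (φ p)
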